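/- arXiv:1604.01734 — 13 statements merged into one kernel-verified Lean document; each statement's English description precedes it below -/
import Mathlib

section
/- An allocation π is sequenceable if and only if no sub-allocation of π is frustrating, i.e., for every nonempty subset O' of objects, at least one agent i receives in π ∩ O' one of her top objects among O' (some object of best(O', i) belongs to π_i ∩ O'). -/
open Finset

variable {A O : Type*}

/-- A sub-allocation on `O'` is frustrating if no agent receives (within `O'`)
one of her top objects of `O'`: every object of `O'` is non-top for its owner. -/
def Frustrating (W : A → O → ℝ) (π : O → A) (O' : Finset O) : Prop :=
  ∀ ℓ ∈ O', ∃ m ∈ O', W (π ℓ) ℓ < W (π ℓ) m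

/-- The sequence `σ` generates `π`: there is an order in which the objects are
picked such that at step `t`, agent `σ t` picks object `ord t`, which she owns in `π`,
and which has maximal weight for her among the remaining objects `ord s`, `s ≥ t`. -/
def Generates {M : ℕ} (W : A → O → ℝ) (σ : Fin M → A) (π : O → A) : Prop :=
  ∃ ord : Fin M ≃ O,
    (∀ t, π (ord t) = σ t) ∧
    ∀ t s : Fin M, t ≤ s → W (σ t) (ord s) ≤ W (σ t) (ord t)

/-- An allocation is sequenceable if some sequence of sincere choices generates it. -/
def Sequenceable (W : A → O → ℝ) (π : O → A) : Prop :=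
  ∃ (M : ℕ) (σ : Fin M → A), Generates W σ π

private lemma exists_good_list [DecidableEq O] (W : A → O → ℝ) (π : O → A)
    (h : ∀ O' : Finset O, O'.Nonempty → ¬ Frustrating W π O') (S : Finset O) :
    ∃ l : List O, l.toFinset = S ∧ l.Nodup ∧
      l.Pairwise (fun a b => W (π a) b ≤ W (π a) a) := by
  induction S using Finset.strongInduction with
  | _ S ih =>
    rcases S.eq_empty_or_nonempty with rfl | hne
    · exact ⟨[], by simp, by simp, by simp⟩
    · have hnf := h S hne
      unfold Frustrating at hnf
      push_neg at hnf
      obtain ⟨ℓ, hℓS, hℓ⟩ := hnf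
      obtain ⟨l', hl't, hl'n, hl'p⟩ := ih (S.erase ℓ) (Finset.erase_ssubset hℓS)
      refine ⟨ℓ :: l', ?_, ?_, ?_⟩
      · simp [hl't, Finset.insert_erase hℓS]
      · refine List.nodup_cons.2 ⟨?_, hl'n⟩
        intro hmem
        have : ℓ ∈ S.erase ℓ := by rw [← hl't]; exact List.mem_toFinset.2 hmem
        exact (Finset.notMem_erase ℓ S) this
      · refine List.pairwise_cons.2 ⟨?_, hl'p⟩
        intro b hb
        have : b ∈ S.erase ℓ := by rw [← hl't]; exact List.mem_toFinset.2 hb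
        exact hℓ b (Finset.mem_of_mem_erase this)

/-- An allocation is sequenceable iff no (nonempty) sub-allocation of it is frustrating. -/
theorem sequenceable_iff_no_frustrating_suballocation [Fintype O]
    (W : A → O → ℝ) (π : O → A) :
    Sequenceable W π ↔ ∀ O' : Finset O, O'.Nonempty → ¬ Frustrating W π O' := by
  classical
  constructor
  · rintro ⟨M, σ, ord, hown, hmax⟩ O' hO' hf
    set T : Finset (Fin M) := O'.image ord.symm with hT
    have hTne : T.Nonempty := hO'.image _
    set t := T.min' hTne with ht
    have htT : t ∈ T := T.min'_mem hTne
    obtain ⟨ℓ, hℓO', hℓt⟩ := Finset.mem_image.1 htT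
    have hordt : ord t = ℓ := by rw [← hℓt]; simp
    obtain ⟨m, hmO', hlt⟩ := hf ℓ hℓO'
    have hts : t ≤ ord.symm m :=
      T.min'_le _ (Finset.mem_image.2 ⟨m, hmO', rfl⟩)
    have := hmax t (ord.symm m) hts
    rw [← hown t, hordt] at this
    simp at this
    exact absurd hlt (not_lt.2 this)
  · intro h
    obtain ⟨l, hlt, hln, hlp⟩ := exists_good_list W π h Finset.univ
    have hbij : Function.Bijective l.get := by
      constructor
      · exact (List.nodup_iff_injective_get).1 hln
      · intro x
        have : x ∈ l := by rw [← List.mem_toFinset, hlt]; exact Finset.mem_univ x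
        obtain ⟨i, hi⟩ := List.mem_iff_get.1 this
        exact ⟨i, hi⟩
    refine ⟨l.length, fun t => π (l.get t), Equiv.ofBijective l.get hbij, ?_, ?_⟩
    · intro t; rfl
    · intro t s hts
      rcases eq_or_lt_of_le hts with rfl | hlt'
      · exact le_refl _
      · have := List.pairwise_iff_get.1 hlp t s hlt'
        simpa using this
end

section
/- Sequenceability of a given allocation can be decided by a greedy algorithm: repeatedly, if some agent owns (in π) one of her top objects among the remaining objects, remove that object and append the agent to the sequence; the allocation is sequenceable if and only if this process successfully removes all M objects. (Formally: the greedy process fails at some step if and only if π contains a frustrating sub-allocation.) -/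
open Finset

variable {A O : Type*}

/-- One greedy step: remove an object of `O'` that is a top object (within `O'`)
of its owner in `π`. -/
def GreedyStep [DecidableEq O] (W : A → O → ℝ) (π : O → A) (O' O'' : Finset O) : Prop :=
  ∃ ℓ ∈ O', (∀ m ∈ O', W (π ℓ) m ≤ W (π ℓ) ℓ) ∧ O'' = O'.erase ℓ

/-- If there is a frustrating nonempty set `O' ⊆ S`, then from `S` the greedy process
reaches a nonempty frustrating (hence stuck) set. -/
lemma stuck_reach [DecidableEq O] (W : A → O → ℝ) (π : O → A)
    {O' : Finset O} (hne : O'.Nonempty) (hfr : Frustrating W π O') :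
    ∀ S : Finset O, O' ⊆ S →
      ∃ T, Relation.ReflTransGen (GreedyStep W π) S T ∧ T.Nonempty ∧ Frustrating W π T := by
  intro S
  induction S using Finset.strongInduction with
  | _ S ih =>
    intro hsub
    by_cases h : ∃ ℓ ∈ S, ∀ m ∈ S, W (π ℓ) m ≤ W (π ℓ) ℓ
    · obtain ⟨ℓ, hℓS, htop⟩ := h
      have hℓnot : ℓ ∉ O' := by
        intro hmem
        obtain ⟨m, hm, hlt⟩ := hfr ℓ hmem
        exact absurd (htop m (hsub hm)) (not_le.mpr hlt)
      have hsub' : O' ⊆ S.erase ℓ := fun x hx =>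
        Finset.mem_erase.mpr ⟨fun h => hℓnot (h ▸ hx), hsub hx⟩
      obtain ⟨T, hT, hTne, hTfr⟩ := ih (S.erase ℓ) (Finset.erase_ssubset hℓS) hsub'
      exact ⟨T, Relation.ReflTransGen.head ⟨ℓ, hℓS, htop, rfl⟩ hT, hTne, hTfr⟩
    · push_neg at h
      exact ⟨S, Relation.ReflTransGen.refl, hne.mono hsub,
        fun ℓ hℓ => by obtain ⟨m, hm, hlt⟩ := h ℓ hℓ; exact ⟨m, hm, hlt⟩⟩

/-- From a greedy run `S →* ∅` one extracts the picking order as a list. -/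
lemma emptied_list [DecidableEq O] (W : A → O → ℝ) (π : O → A)
    {S : Finset O} (h : Relation.ReflTransGen (GreedyStep W π) S ∅) :
    ∃ l : List O, l.Nodup ∧ l.toFinset = S ∧
      ∀ i j : Fin l.length, i ≤ j →
        W (π (l.get i)) (l.get j) ≤ W (π (l.get i)) (l.get i) := by
  induction h using Relation.ReflTransGen.head_induction_on with
  | refl => exact ⟨[], by simp, by simp, fun i => absurd i.2 (by simp)⟩
  | @head T T' hstep hchain ih =>
    obtain ⟨l, hnd, htf, hord⟩ := ih
    obtain ⟨ℓ, hℓ, htop, rfl⟩ := hstep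
    have hmem_l : ∀ x ∈ l, x ∈ T ∧ x ≠ ℓ := by
      intro x hx
      have := htf ▸ List.mem_toFinset.mpr hx
      exact ⟨Finset.mem_of_mem_erase this, Finset.ne_of_mem_erase this⟩
    refine ⟨ℓ :: l, ?_, ?_, ?_⟩
    · exact List.nodup_cons.mpr ⟨fun hx => (hmem_l ℓ hx).2 rfl, hnd⟩
    · simp [htf, Finset.insert_erase hℓ]
    · intro i j
      refine Fin.cases ?_ (fun i' => ?_) i <;> refine Fin.cases ?_ (fun j' => ?_) j <;>
        intro hij
      · exact le_refl _
      · simp only [List.get_cons_succ, List.get_cons_zero]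
        exact htop (l.get j') (hmem_l _ (l.get_mem _)).1
      · simp [Fin.le_def] at hij
      · have hij' : i' ≤ j' := by
          simp only [Fin.le_def, Fin.val_succ] at hij ⊢; omega
        exact hord i' j' hij'

/-- A generating sequence yields a greedy run `univ →* ∅`. -/
lemma gen_chain [Fintype O] [DecidableEq O] (W : A → O → ℝ) (π : O → A)
    {M : ℕ} (σ : Fin M → A) (ord : Fin M ≃ O)
    (hπ : ∀ t, π (ord t) = σ t)
    (hmax : ∀ t s : Fin M, t ≤ s → W (σ t) (ord s) ≤ W (σ t) (ord t)) :
    Relation.ReflTransGen (GreedyStep W π) Finset.univ ∅ := by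
  set R : ℕ → Finset O := fun t => (Finset.univ.filter (fun s : Fin M => t ≤ (s : ℕ))).image ord
    with hR
  have hR0 : R 0 = Finset.univ := by
    apply Finset.eq_univ_of_forall
    intro x
    simp [hR]
  have hRM : R M = ∅ := by
    apply Finset.eq_empty_of_forall_notMem
    intro x
    simp [hR]
  have hstep : ∀ t (ht : t < M), GreedyStep W π (R t) (R (t + 1)) := by
    intro t ht
    refine ⟨ord ⟨t, ht⟩, ?_, ?_, ?_⟩
    · simp [hR]
    · intro m hm
      simp [hR] at hm
      obtain ⟨s, hts, rfl⟩ := hm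
      rw [hπ]
      exact hmax ⟨t, ht⟩ s hts
    · ext x
      simp only [hR, Finset.mem_erase, Finset.mem_image, Finset.mem_filter, Finset.mem_univ,
        true_and]
      constructor
      · rintro ⟨s, hs, rfl⟩
        refine ⟨fun h => ?_, s, by omega, rfl⟩
        have : s = ⟨t, ht⟩ := ord.injective h
        have hv : (s : ℕ) = t := by rw [this]
        omega
      · rintro ⟨hne, s, hs, rfl⟩
        have : (s : ℕ) ≠ t := fun h => hne (by congr 1; exact Fin.ext h)
        exact ⟨s, by omega, rfl⟩
  have key : ∀ n, Relation.ReflTransGen (GreedyStep W π) (R (M - n)) ∅ := by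
    intro n
    induction n with
    | zero => simpa [hRM] using Relation.ReflTransGen.refl
    | succ n ih =>
      by_cases h : M ≤ n
      · have : M - (n + 1) = M - n := by omega
        rw [this]; exact ih
      · have h1 : M - (n + 1) < M := by omega
        have h2 : M - (n + 1) + 1 = M - n := by omega
        exact Relation.ReflTransGen.head (hstep _ h1) (h2 ▸ ih)
  have := key M
  simpa [hR0] using this

/-- The greedy algorithm decides sequenceability: `π` is sequenceable iff greedy can
remove all objects; and the greedy process gets stuck at some (reachable, nonempty)
remaining set iff `π` contains a frustrating sub-allocation. -/
theorem greedy_decides_sequenceability [Fintype O] [DecidableEq O]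
    (W : A → O → ℝ) (π : O → A) :
    (Sequenceable W π ↔ Relation.ReflTransGen (GreedyStep W π) Finset.univ ∅) ∧
    ((∃ O' : Finset O, Relation.ReflTransGen (GreedyStep W π) Finset.univ O' ∧
        O'.Nonempty ∧ Frustrating W π O') ↔
      (∃ O' : Finset O, O'.Nonempty ∧ Frustrating W π O')) := by
  constructor
  · constructor
    · rintro ⟨M, σ, ord, hπ, hmax⟩
      exact gen_chain W π σ ord hπ hmax
    · intro h
      obtain ⟨l, hnd, htf, hord⟩ := emptied_list W π h
      have hinj : Function.Injective l.get := List.nodup_iff_injective_get.mp hnd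
      have hsurj : Function.Surjective l.get := by
        intro x
        have : x ∈ l := by
          rw [← List.mem_toFinset, htf]; exact Finset.mem_univ x
        obtain ⟨n, hn⟩ := List.mem_iff_get.mp this
        exact ⟨n, hn⟩
      refine ⟨l.length, fun t => π (l.get t),
        Equiv.ofBijective l.get ⟨hinj, hsurj⟩, fun t => rfl, fun t s hts => ?_⟩
      exact hord t s hts
  · constructor
    · rintro ⟨O', _, hne, hfr⟩
      exact ⟨O', hne, hfr⟩
    · rintro ⟨O', hne, hfr⟩
      obtain ⟨T, hT, hTne, hTfr⟩ :=
        stuck_reach W π hne hfr Finset.univ (Finset.subset_univ O')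
      exact ⟨T, hT, hTne, hTfr⟩
end

section
/- The preferences of an instance are strict on objects (each agent assigns pairwise distinct weights to distinct objects) if and only if every sequence of sincere choices generates exactly one allocation, i.e., the generation relation between sequences and allocations is a (total single-valued) function from sequences to allocations. -/
open Finset

variable {A O : Type*}

/-- Preferences are strict on objects. -/
def StrictOnObjects (W : A → O → ℝ) : Prop :=
  ∀ (i : A) (ℓ m : O), ℓ ≠ m → W i ℓ ≠ W i m

/-- Same order preferences: a common ranking of the objects along which every
agent's weights are weakly decreasing. -/
def SameOrder [Fintype O] (W : A → O → ℝ) : Prop :=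
  ∃ r : O ≃ Fin (Fintype.card O), ∀ (i : A) (ℓ m : O), r ℓ ≤ r m → W i m ≤ W i ℓ

section Greedy

open scoped Classical

variable [Fintype O] (W : A → O → ℝ) (T : O → ℕ) (σ' : ℕ → A)

/-- Pick in `S` a maximizer of `W i`, breaking ties by maximizing `T`. -/
noncomputable def pickIn (i : A) (S : Finset O) (h : S.Nonempty) : O :=
  ((S.filter fun o => ∀ o' ∈ S, W i o' ≤ W i o).exists_max_image T (by
    obtain ⟨b, hb, hbmax⟩ := S.exists_max_image (W i) h
    exact ⟨b, Finset.mem_filter.2 ⟨hb, hbmax⟩⟩)).choose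

lemma pickIn_spec (i : A) (S : Finset O) (h : S.Nonempty) :
    pickIn W T i S h ∈ S ∧ (∀ o ∈ S, W i o ≤ W i (pickIn W T i S h)) ∧
      ∀ o ∈ S, W i (pickIn W T i S h) ≤ W i o → T o ≤ T (pickIn W T i S h) := by
  have hs := ((S.filter fun o => ∀ o' ∈ S, W i o' ≤ W i o).exists_max_image T (by
    obtain ⟨b, hb, hbmax⟩ := S.exists_max_image (W i) h
    exact ⟨b, Finset.mem_filter.2 ⟨hb, hbmax⟩⟩)).choose_spec
  obtain ⟨hmem, hT⟩ := hs
  rw [Finset.mem_filter] at hmem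
  refine ⟨hmem.1, hmem.2, ?_⟩
  intro o ho hWo
  exact hT o (Finset.mem_filter.2 ⟨ho, fun o' ho' => le_trans (hmem.2 o' ho') hWo⟩)

/-- Remaining objects after `n` greedy steps. -/
noncomputable def rem : ℕ → Finset O
  | 0 => Finset.univ
  | n+1 => if h : (rem n).Nonempty then (rem n).erase (pickIn W T (σ' n) (rem n) h) else ∅

lemma rem_succ_subset (n : ℕ) : rem W T σ' (n+1) ⊆ rem W T σ' n := by
  rw [rem]
  split
  · exact Finset.erase_subset _ _
  · exact Finset.empty_subset _

lemma rem_antitone {a b : ℕ} (h : a ≤ b) : rem W T σ' b ⊆ rem W T σ' a := by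
  induction b with
  | zero => simp_all
  | succ n ih =>
    rcases Nat.lt_or_ge a (n+1) with h' | h'
    · exact (rem_succ_subset W T σ' n).trans (ih (Nat.lt_succ_iff.1 h'))
    · have : a = n + 1 := le_antisymm h h'
      subst this; exact subset_rfl

lemma card_rem (n : ℕ) : (rem W T σ' n).card = Fintype.card O - n := by
  induction n with
  | zero => simp [rem]
  | succ n ih =>
    rw [rem]
    split
    · next h =>
      rw [Finset.card_erase_of_mem (pickIn_spec W T (σ' n) _ h).1, ih]
      omega
    · next h =>
      rw [Finset.not_nonempty_iff_eq_empty] at h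
      rw [h] at ih
      simp at ih ⊢
      omega

lemma rem_nonempty {n : ℕ} (h : n < Fintype.card O) : (rem W T σ' n).Nonempty := by
  rw [← Finset.card_pos, card_rem]; omega

/-- The greedy picking order. -/
noncomputable def ordF : Fin (Fintype.card O) → O :=
  fun t => pickIn W T (σ' t) (rem W T σ' t) (rem_nonempty W T σ' t.isLt)

lemma ordF_mem (t : Fin (Fintype.card O)) : ordF W T σ' t ∈ rem W T σ' t :=
  (pickIn_spec W T (σ' t) _ _).1

lemma ordF_max (t : Fin (Fintype.card O)) :
    ∀ o ∈ rem W T σ' t, W (σ' t) o ≤ W (σ' t) (ordF W T σ' t) :=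
  (pickIn_spec W T (σ' t) _ _).2.1

lemma ordF_tie (t : Fin (Fintype.card O)) :
    ∀ o ∈ rem W T σ' t, W (σ' t) (ordF W T σ' t) ≤ W (σ' t) o →
      T o ≤ T (ordF W T σ' t) :=
  (pickIn_spec W T (σ' t) _ _).2.2

lemma rem_succ_eq (t : Fin (Fintype.card O)) :
    rem W T σ' (t+1) = (rem W T σ' t).erase (ordF W T σ' t) := by
  rw [rem, dif_pos (rem_nonempty W T σ' t.isLt)]
  rfl

lemma ordF_not_mem_succ (t : Fin (Fintype.card O)) :
    ordF W T σ' t ∉ rem W T σ' (t.val + 1) := by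
  rw [rem_succ_eq]
  exact Finset.notMem_erase _ _

lemma ordF_injective : Function.Injective (ordF W T σ') := by
  intro t s hts
  by_contra hne
  wlog hlt : t < s generalizing t s
  · exact this hts.symm (Ne.symm hne) (lt_of_le_of_ne (not_lt.1 hlt) (Ne.symm hne))
  have h1 : ordF W T σ' s ∈ rem W T σ' (t.val + 1) :=
    rem_antitone W T σ' (by exact_mod_cast hlt) (ordF_mem W T σ' s)
  rw [← hts] at h1
  exact ordF_not_mem_succ W T σ' t h1

lemma ordF_bijective : Function.Bijective (ordF W T σ') :=
  (Fintype.bijective_iff_injective_and_card _).2 ⟨ordF_injective W T σ', by simp⟩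

/-- The greedy picking order as an equivalence. -/
noncomputable def ordE : Fin (Fintype.card O) ≃ O :=
  Equiv.ofBijective _ (ordF_bijective W T σ')

lemma ordE_apply (t : Fin (Fintype.card O)) : ordE W T σ' t = ordF W T σ' t := rfl

lemma generates_greedy (σ : Fin (Fintype.card O) → A)
    (hσ : ∀ t : Fin (Fintype.card O), σ' t = σ t) :
    Generates W σ (fun o => σ ((ordE W T σ').symm o)) := by
  refine ⟨ordE W T σ', fun t => by simp, fun t s hts => ?_⟩
  have hmem : ordF W T σ' s ∈ rem W T σ' t :=
    rem_antitone W T σ' (by exact_mod_cast hts) (ordF_mem W T σ' s)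
  have := ordF_max W T σ' t _ hmem
  rwa [hσ t] at this

end Greedy

lemma gen_unique {M : ℕ} {W : A → O → ℝ} (hW : StrictOnObjects W) (σ : Fin M → A)
    {π1 π2 : O → A} (h1 : Generates W σ π1) (h2 : Generates W σ π2) : π1 = π2 := by
  obtain ⟨e1, hp1, hm1⟩ := h1
  obtain ⟨e2, hp2, hm2⟩ := h2
  have key : ∀ n : ℕ, ∀ t : Fin M, t.val = n → e1 t = e2 t := by
    intro n
    induction n using Nat.strong_induction_on with
    | _ n IH =>
      intro t ht
      have hle : ∀ (f g : Fin M ≃ O), (∀ t s, t ≤ s → W (σ t) (f s) ≤ W (σ t) (f t)) →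
          (∀ s : Fin M, s.val < t.val → f s = g s) → W (σ t) (g t) ≤ W (σ t) (f t) := by
        intro f g hmax hagree
        set s := f.symm (g t) with hs
        have hgt : g t = f s := (f.apply_symm_apply _).symm
        have hts : t ≤ s := by
          by_contra hlt
          push_neg at hlt
          have hfs : f s = g s := hagree s hlt
          rw [hfs] at hgt
          have h2 := g.injective hgt
          rw [h2] at hlt
          exact lt_irrefl _ hlt
        rw [hgt]
        exact hmax t s hts
      have h12 := hle e1 e2 hm1 (fun s hs => IH s.val (ht ▸ hs) s rfl)
      have h21 := hle e2 e1 hm2 (fun s hs => (IH s.val (ht ▸ hs) s rfl).symm)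
      by_contra hne
      exact hW (σ t) (e1 t) (e2 t) hne (le_antisymm h21 h12)
  funext o
  have hA1 := hp1 (e1.symm o)
  rw [e1.apply_symm_apply] at hA1
  have hA2 := hp2 (e1.symm o)
  rw [← key (e1.symm o).val (e1.symm o) rfl, e1.apply_symm_apply] at hA2
  rw [hA1, hA2]

/-- Preferences are strict on objects iff every sequence generates exactly one
allocation (the generation relation is a total single-valued function). -/
theorem strict_iff_generation_is_function [Fintype A] [Fintype O]
    (hA : 2 ≤ Fintype.card A) (W : A → O → ℝ) :
    StrictOnObjects W ↔
      ∀ σ : Fin (Fintype.card O) → A, ∃! π : O → A, Generates W σ π := by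
  classical
  have hAne : Nonempty A := Fintype.card_pos_iff.1 (by omega)
  constructor
  · intro hW σ
    set σ' : ℕ → A := fun n =>
      if h : n < Fintype.card O then σ ⟨n, h⟩ else Classical.arbitrary A with hσ'
    have hσ : ∀ t : Fin (Fintype.card O), σ' t = σ t := by
      intro t; simp [hσ']
    exact ⟨_, generates_greedy W (fun _ => 0) σ' σ hσ,
      fun π hπ => gen_unique hW σ hπ (generates_greedy W (fun _ => 0) σ' σ hσ)⟩
  · intro h i ℓ m hlm
    intro heqc
    obtain ⟨j, hj⟩ := Fintype.exists_ne_of_one_lt_card (by omega) i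
    set B : Finset O := Finset.univ.filter (fun o => W i ℓ < W i o) with hB
    set k := B.card with hk
    have hlB : ℓ ∉ B := by simp [hB]
    have hmB : m ∉ B := by simp [hB, ← heqc]
    have hkM : k + 2 ≤ Fintype.card O := by
      have hc : (insert ℓ (insert m B)).card = k + 2 := by
        rw [Finset.card_insert_of_notMem (by simp [hlm, hlB]),
          Finset.card_insert_of_notMem hmB]
      calc k + 2 = (insert ℓ (insert m B)).card := hc.symm
        _ ≤ Finset.univ.card := Finset.card_le_card (Finset.subset_univ _)
        _ = Fintype.card O := Finset.card_univ
    have hkM' : k < Fintype.card O := by omega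
    set σ' : ℕ → A := fun n => if n ≤ k then i else j with hσ'
    set σ : Fin (Fintype.card O) → A := fun t => σ' t.val with hσdef
    -- invariant: during the first k steps, ℓ and m survive and B shrinks
    have inv : ∀ T : O → ℕ, ∀ n ≤ k, (B ∩ rem W T σ' n).card = k - n ∧
        ℓ ∈ rem W T σ' n ∧ m ∈ rem W T σ' n := by
      intro T n
      induction n with
      | zero => intro _; simp [rem]; rfl
      | succ n ih =>
        intro hn
        obtain ⟨hcard, hl, hm⟩ := ih (by omega)
        have hne : (rem W T σ' n).Nonempty := ⟨ℓ, hl⟩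
        have hrem : rem W T σ' (n+1) =
            (rem W T σ' n).erase (pickIn W T (σ' n) _ hne) := by
          rw [rem, dif_pos hne]
        set p := pickIn W T (σ' n) (rem W T σ' n) hne with hp
        have hσn : σ' n = i := if_pos (by omega : n ≤ k)
        have hBne : (B ∩ rem W T σ' n).Nonempty := by
          rw [← Finset.card_pos, hcard]; omega
        obtain ⟨b, hb⟩ := hBne
        rw [Finset.mem_inter] at hb
        have hbB : W i ℓ < W i b := (Finset.mem_filter.1 hb.1).2
        have hbp : W i b ≤ W i p := by
          have h' := (pickIn_spec W T (σ' n) _ hne).2.1 b hb.2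
          rw [← hp] at h'
          rwa [hσn] at h'
        have hplt : W i ℓ < W i p := lt_of_lt_of_le hbB hbp
        have hpB : p ∈ B := Finset.mem_filter.2 ⟨Finset.mem_univ _, hplt⟩
        have hpl : p ≠ ℓ := fun hq => by rw [hq] at hplt; exact lt_irrefl _ hplt
        have hpm : p ≠ m := fun hq => by
          rw [hq, ← heqc] at hplt; exact lt_irrefl _ hplt
        refine ⟨?_, ?_, ?_⟩
        · rw [hrem, Finset.inter_erase,
            Finset.card_erase_of_mem (Finset.mem_inter.2 ⟨hpB,
              (pickIn_spec W T (σ' n) _ hne).1⟩), hcard]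
          omega
        · rw [hrem]; exact Finset.mem_erase.2 ⟨Ne.symm hpl, hl⟩
        · rw [hrem]; exact Finset.mem_erase.2 ⟨Ne.symm hpm, hm⟩
    set K : Fin (Fintype.card O) := ⟨k, hkM'⟩ with hKdef
    -- at step k, the pick is a tie between ℓ and m, broken by T
    have stepk : ∀ T : O → ℕ, W i (ordF W T σ' K) = W i ℓ ∧
        T ℓ ≤ T (ordF W T σ' K) ∧ T m ≤ T (ordF W T σ' K) := by
      intro T
      obtain ⟨hcard, hl, hm⟩ := inv T k le_rfl
      have hσk : σ' (K : ℕ) = i := if_pos le_rfl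
      have hBk : B ∩ rem W T σ' k = ∅ := Finset.card_eq_zero.1 (by omega)
      have hub : ∀ o ∈ rem W T σ' k, W i o ≤ W i ℓ := by
        intro o ho
        by_contra hlt
        push_neg at hlt
        have hoB : o ∈ B ∩ rem W T σ' k :=
          Finset.mem_inter.2 ⟨Finset.mem_filter.2 ⟨Finset.mem_univ _, hlt⟩, ho⟩
        rw [hBk] at hoB
        exact absurd hoB (Finset.notMem_empty o)
      have hmemK : ordF W T σ' K ∈ rem W T σ' k := ordF_mem W T σ' K
      have hle1 : W i (ordF W T σ' K) ≤ W i ℓ := hub _ hmemK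
      have hle2 : W i ℓ ≤ W i (ordF W T σ' K) := by
        have := ordF_max W T σ' K ℓ hl
        rwa [hσk] at this
      have heqW : W i (ordF W T σ' K) = W i ℓ := le_antisymm hle1 hle2
      have htie1 : T ℓ ≤ T (ordF W T σ' K) := by
        have := ordF_tie W T σ' K ℓ hl
        rw [hσk] at this
        exact this hle1
      have htie2 : T m ≤ T (ordF W T σ' K) := by
        have := ordF_tie W T σ' K m hm
        rw [hσk] at this
        exact this (by rw [heqW, heqc])
      exact ⟨heqW, htie1, htie2⟩
    set T1 : O → ℕ := fun o =>
      if o = ℓ then Fintype.card O else (Fintype.equivFin O o).val with hT1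
    set T2 : O → ℕ := fun o =>
      if o = m then Fintype.card O else (Fintype.equivFin O o).val with hT2
    have hpick1 : ordF W T1 σ' K = ℓ := by
      obtain ⟨_, htie, _⟩ := stepk T1
      by_contra hne
      rw [hT1] at htie hne
      simp only [if_pos rfl, if_neg hne, if_true] at htie
      exact absurd htie (not_le.2 (Fintype.equivFin O _).isLt)
    have hpick2 : ordF W T2 σ' K = m := by
      obtain ⟨_, _, htie⟩ := stepk T2
      by_contra hne
      rw [hT2] at htie hne
      simp only [if_pos rfl, if_neg hne, if_true] at htie
      exact absurd htie (not_le.2 (Fintype.equivFin O _).isLt)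
    -- two distinct generated allocations
    have g1 := generates_greedy W T1 σ' σ (fun t => rfl)
    have g2 := generates_greedy W T2 σ' σ (fun t => rfl)
    obtain ⟨π, hπ, huniq⟩ := h σ
    have hπ12 : (fun o => σ ((ordE W T1 σ').symm o)) =
        (fun o => σ ((ordE W T2 σ').symm o)) := (huniq _ g1).trans (huniq _ g2).symm
    have hv1 : (ordE W T1 σ').symm ℓ = K := by
      rw [Equiv.symm_apply_eq, ordE_apply, hpick1]
    set t2 : Fin (Fintype.card O) := (ordE W T2 σ').symm ℓ with ht2
    have ht2val : ordF W T2 σ' t2 = ℓ := (ordE W T2 σ').apply_symm_apply ℓ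
    have ht2K : t2 ≠ K := by
      intro hq
      rw [hq, hpick2] at ht2val
      exact hlm (ht2val.symm)
    have ht2k : ¬ t2.val < k := by
      intro hq
      have hlmem : ℓ ∈ rem W T2 σ' k := (inv T2 k le_rfl).2.1
      have : ℓ ∈ rem W T2 σ' (t2.val + 1) :=
        rem_antitone W T2 σ' (by omega) hlmem
      rw [← ht2val] at this
      exact ordF_not_mem_succ W T2 σ' t2 this
    have ht2gt : k < t2.val := by
      rcases Nat.lt_or_ge k t2.val with hq | hq
      · exact hq
      · exfalso
        rcases Nat.lt_or_ge t2.val k with hq' | hq'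
        · exact ht2k hq'
        · exact ht2K (Fin.ext (le_antisymm hq hq'))
    have hval := congrFun hπ12 ℓ
    rw [hv1] at hval
    have hL : σ K = i := by
      rw [hσdef]; simp only []
      exact if_pos le_rfl
    have hR : σ t2 = j := by
      rw [hσdef]; simp only []
      exact if_neg (by omega)
    rw [hL, ← ht2] at hval
    rw [hR] at hval
    exact hj hval.symm
end

section
/- If an instance has same order preferences (there is a common ranking of objects such that every agent's weights are weakly decreasing along it), then every allocation of this instance is sequenceable. -/
open Finset

variable {A O : Type*}

/-- With same order preferences, every allocation is sequenceable. -/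
theorem sameOrder_all_sequenceable [Fintype O]
    (W : A → O → ℝ) (h : SameOrder W) (π : O → A) :
    Sequenceable W π := by
  obtain ⟨r, hr⟩ := h
  exact ⟨Fintype.card O, fun t => π (r.symm t), r.symm, fun t => rfl,
    fun t s hts => hr _ _ _ (by simpa using hts)⟩
end

section
/- If every allocation of an instance is sequenceable then the instance has same order preferences: if the instance does not have same order preferences, then there exists a non-sequenceable allocation. -/
open Finset

variable {A O : Type*}

/-- If every allocation is sequenceable, the instance has same order preferences. -/
theorem all_sequenceable_imp_sameOrder [Fintype A] [Fintype O]
    (hA : 2 ≤ Fintype.card A) (hO : 2 ≤ Fintype.card O)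
    (W : A → O → ℝ) (h : ∀ π : O → A, Sequenceable W π) :
    SameOrder W := by
  classical
  by_cases hc : ∀ ℓ m : O, (∀ i, W i ℓ ≤ W i m) ∨ (∀ i, W i m ≤ W i ℓ)
  · -- construct a common order by sorting
    set le : O → O → Bool := fun ℓ m => decide (∀ i, W i m ≤ W i ℓ) with hle
    have htrans : ∀ a b c : O, le a b → le b c → le a c := by
      intro a b c h1 h2
      simp only [hle, decide_eq_true_eq] at *
      exact fun i => (h2 i).trans (h1 i)
    have htotal : ∀ a b : O, le a b || le b a := by
      intro a b
      simp only [hle, Bool.or_eq_true, decide_eq_true_eq]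
      exact (hc b a)
    set L : List O := (Finset.univ : Finset O).toList.mergeSort le with hL
    have hperm : L.Perm (Finset.univ : Finset O).toList := List.mergeSort_perm _ _
    have hnodup : L.Nodup := hperm.nodup_iff.2 (Finset.nodup_toList _)
    have hmem : ∀ x : O, x ∈ L := fun x =>
      hperm.mem_iff.2 (Finset.mem_toList.2 (Finset.mem_univ x))
    have hsorted : L.Pairwise (fun a b => le a b) :=
      List.pairwise_mergeSort htrans htotal _
    have hlen : L.length = Fintype.card O := by
      rw [hperm.length_eq, Finset.length_toList, Finset.card_univ]
    let e : Fin L.length ≃ O := hnodup.getEquivOfForallMemList L hmem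
    refine ⟨(e.symm).trans (finCongr hlen), ?_⟩
    intro i ℓ m hr
    have hr' : (e.symm ℓ : ℕ) ≤ (e.symm m : ℕ) := hr
    have key : le ℓ m := by
      rcases eq_or_lt_of_le hr' with heq | hlt
      · have : e.symm ℓ = e.symm m := Fin.ext heq
        have : ℓ = m := e.symm.injective this
        subst this
        simpa [hle] using fun i => le_refl (W i ℓ)
      · have h1 : L.get (e.symm ℓ) = ℓ := e.apply_symm_apply ℓ
        have h2 : L.get (e.symm m) = m := e.apply_symm_apply m
        
        have := List.pairwise_iff_get.1 hsorted (e.symm ℓ) (e.symm m) hlt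
        rwa [h1, h2] at this
    simp only [hle, decide_eq_true_eq] at key
    exact key i
  · -- crossing exists: build a non-sequenceable allocation
    push_neg at hc
    obtain ⟨ℓ, m, ⟨i, hi⟩, ⟨j, hj⟩⟩ := hc
    -- hi : W i m < W i ℓ, hj : W j ℓ < W j m
    exfalso
    set π : O → A := fun o => if o = ℓ then j else i with hπ
    obtain ⟨M, σ, ord, hown, hpick⟩ := h π
    have hlm : ℓ ≠ m := fun e => by rw [e] at hi; exact lt_irrefl _ hi
    have hσℓ : σ (ord.symm ℓ) = j := by
      have := hown (ord.symm ℓ); rw [ord.apply_symm_apply] at this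
      simpa [hπ] using this.symm
    have hσm : σ (ord.symm m) = i := by
      have := hown (ord.symm m); rw [ord.apply_symm_apply] at this
      simp [hπ, hlm.symm] at this; exact this.symm
    rcases le_total (ord.symm ℓ) (ord.symm m) with hle' | hle'
    · have := hpick _ _ hle'
      rw [ord.apply_symm_apply, ord.apply_symm_apply, hσℓ] at this
      exact absurd this (not_le.2 hj)
    · have := hpick _ _ hle'
      rw [ord.apply_symm_apply, ord.apply_symm_apply, hσm] at this
      exact absurd this (not_le.2 hi)
end

section
/- For an instance, the relation between sequences and the allocations they generate is a bijection from the set of sequences to the set of all allocations if and only if the preferences are strict on objects and same order. -/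
open Finset

variable {A O : Type*}

/-- Antitone enumeration of a finite type along a real-valued function. -/
private lemma sortEnum [Fintype O] (f : O → ℝ) :
    ∃ e : Fin (Fintype.card O) ≃ O,
      ∀ t s : Fin (Fintype.card O), t ≤ s → f (e s) ≤ f (e t) := by
  classical
  let e0 : Fin (Fintype.card O) ≃ O := (Fintype.equivFin O).symm
  let g : Fin (Fintype.card O) → ℝ := fun t => -(f (e0 t))
  refine ⟨(Tuple.sort g).trans e0, fun t s hts => ?_⟩
  have h := Tuple.monotone_sort g hts
  simp only [Function.comp_apply, g, neg_le_neg_iff] at h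
  simpa [Equiv.trans_apply] using h

/-- A lower set in `Fin M` is an initial segment. -/
private lemma mem_iff_lt_card_of_lower {M : ℕ} (S : Finset (Fin M))
    (hS : ∀ t s : Fin M, t ≤ s → s ∈ S → t ∈ S) (t : Fin M) :
    t ∈ S ↔ (t : ℕ) < S.card := by
  constructor
  · intro ht
    have hsub : Finset.Iic t ⊆ S := fun s hs => hS s t (Finset.mem_Iic.1 hs) ht
    have := Finset.card_le_card hsub
    rw [Fin.card_Iic] at this
    omega
  · intro ht
    by_contra hts
    have hsub : S ⊆ Finset.Iio t := by
      intro s hs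
      rw [Finset.mem_Iio]
      by_contra hlt
      exact hts (hS t s (le_of_not_gt hlt) hs)
    have := Finset.card_le_card hsub
    rw [Fin.card_Iio] at this
    omega

/-- A two-block sequence (`i` takes `F`, then `j` takes the rest) generates the
corresponding two-block allocation, provided `i` weakly prefers `F` to its complement. -/
private lemma generates_twoBlock [Fintype O] [DecidableEq O] (W : A → O → ℝ) (i j : A) (F : Finset O)
    (hF : ∀ x ∈ F, ∀ y : O, y ∉ F → W i y ≤ W i x) :
    Generates W (fun t : Fin (Fintype.card O) => if (t : ℕ) < F.card then i else j)
      (fun o => if o ∈ F then i else j) := by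
  classical
  by_cases hO : Nonempty O
  · have hne : (Finset.univ : Finset (O × O)).Nonempty := Finset.univ_nonempty
    set B : ℝ := 1 + Finset.univ.sup' hne (fun p : O × O => W j p.2 - W i p.1) with hB
    have hBlt : ∀ x y : O, W j y < B + W i x := by
      intro x y
      have h1 : W j y - W i x ≤ Finset.univ.sup' hne (fun p : O × O => W j p.2 - W i p.1) :=
        Finset.le_sup' (fun p : O × O => W j p.2 - W i p.1) (Finset.mem_univ (x, y))
      rw [hB]; linarith
    set f1 : O → ℝ := fun o => if o ∈ F then B + W i o else W j o with hf1
    obtain ⟨e, hsort⟩ := sortEnum f1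
    set S : Finset (Fin (Fintype.card O)) := Finset.univ.filter (fun t => e t ∈ F) with hSdef
    have hScard : S.card = F.card := by
      apply Finset.card_bij (fun t _ => e t)
      · intro a ha; exact (Finset.mem_filter.1 ha).2
      · intro a _ b _ hab; exact e.injective hab
      · intro x hx
        exact ⟨e.symm x, Finset.mem_filter.2 ⟨Finset.mem_univ _, by simp [hx]⟩, by simp⟩
    have hlow : ∀ t s : Fin (Fintype.card O), t ≤ s → s ∈ S → t ∈ S := by
      intro t s hts hs
      rw [Finset.mem_filter] at hs ⊢
      refine ⟨Finset.mem_univ _, ?_⟩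
      by_contra htF
      have h1 := hsort t s hts
      rw [hf1] at h1
      simp only [if_pos hs.2, if_neg htF] at h1
      exact absurd h1 (not_le.2 (hBlt (e s) (e t)))
    have key : ∀ t : Fin (Fintype.card O), e t ∈ F ↔ (t : ℕ) < F.card := by
      intro t
      rw [← hScard, ← mem_iff_lt_card_of_lower S hlow t, hSdef, Finset.mem_filter]
      simp
    refine ⟨e, ?_, ?_⟩
    · intro t
      by_cases h : (t : ℕ) < F.card <;> simp [h, key t]
    · intro t s hts
      by_cases ht : (t : ℕ) < F.card
      · simp only [if_pos ht]
        have htF := (key t).2 ht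
        by_cases hsF : e s ∈ F
        · have h1 := hsort t s hts
          rw [hf1] at h1
          simp only [if_pos hsF, if_pos htF] at h1
          linarith
        · exact hF _ htF _ hsF
      · simp only [if_neg ht]
        have htF : e t ∉ F := fun h => ht ((key t).1 h)
        have hsF : e s ∉ F := by
          intro h
          have := (key s).1 h
          have hts' : (t : ℕ) ≤ (s : ℕ) := hts
          omega
        have h1 := hsort t s hts
        rw [hf1] at h1
        simp only [if_neg hsF, if_neg htF] at h1
        exact h1
  · haveI hOE : IsEmpty O := not_nonempty_iff.1 hO
    haveI : IsEmpty (Fin (Fintype.card O)) := by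
      rw [Fintype.card_eq_zero]
      infer_instance
    exact ⟨Equiv.equivOfIsEmpty _ _, fun t => isEmptyElim t, fun t _ _ => isEmptyElim t⟩

/-- With strict same-order preferences, any generating pick-order is forced to be
the common ranking. -/
private lemma ord_eq_of_sameOrder [Fintype O] {W : A → O → ℝ}
    (hstrict : StrictOnObjects W) (r : O ≃ Fin (Fintype.card O))
    (hr : ∀ (i : A) (ℓ m : O), r ℓ ≤ r m → W i m ≤ W i ℓ)
    {σ : Fin (Fintype.card O) → A} {π : O → A} (ord : Fin (Fintype.card O) ≃ O)
    (hord : ∀ t, π (ord t) = σ t)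
    (hsin : ∀ t s, t ≤ s → W (σ t) (ord s) ≤ W (σ t) (ord t)) :
    ∀ t, ord t = r.symm t := by
  have hmono : StrictMono fun t => r (ord t) := by
    intro t s hts
    rcases lt_or_ge (r (ord t)) (r (ord s)) with h | h
    · exact h
    · exfalso
      have h1 := hsin t s hts.le
      have h2 := hr (σ t) (ord s) (ord t) h
      have hne : ord s ≠ ord t := fun he => hts.ne' (ord.injective he)
      exact hstrict (σ t) (ord s) (ord t) hne (le_antisymm h1 h2)
  have hmono1 : Monotone (ord.trans r) := hmono.monotone
  have hmono2 : Monotone (ord.trans r).symm := by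
    intro a b hab
    by_contra h
    push_neg at h
    have h2 := hmono h
    simp only [] at h2
    have e1 : r (ord ((ord.trans r).symm a)) = a := by
      rw [← Equiv.trans_apply]; exact (ord.trans r).apply_symm_apply a
    have e2 : r (ord ((ord.trans r).symm b)) = b := by
      rw [← Equiv.trans_apply]; exact (ord.trans r).apply_symm_apply b
    rw [e1, e2] at h2
    exact absurd h2 (not_lt.2 hab)
  have hiso := Subsingleton.elim ((ord.trans r).toOrderIso hmono1 hmono2) (OrderIso.refl _)
  intro t
  have h3 : r (ord t) = t := by
    have h4 := DFunLike.congr_fun hiso t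
    simpa using h4
  exact (r.eq_symm_apply).2 h3

/-- The generation relation between sequences and allocations is a bijection iff
preferences are strict on objects and same order. -/
theorem generation_bijection_iff_strict_and_sameOrder [Fintype A] [Fintype O]
    (hA : 2 ≤ Fintype.card A) (W : A → O → ℝ) :
    ((∀ σ : Fin (Fintype.card O) → A, ∃! π : O → A, Generates W σ π) ∧
     (∀ π : O → A, ∃! σ : Fin (Fintype.card O) → A, Generates W σ π)) ↔
    (StrictOnObjects W ∧ SameOrder W) := by
  classical
  constructor
  · rintro ⟨H1, H2⟩
    have hstrict : StrictOnObjects W := by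
      intro i ℓ m hlm heq
      obtain ⟨j, hj⟩ := Fintype.exists_ne_of_one_lt_card (by omega) i
      set S : Finset O := Finset.univ.filter (fun o => W i ℓ < W i o) with hS
      have hlS : ℓ ∉ S := by simp [hS]
      have hmS : m ∉ S := by simp [hS, ← heq]
      have hcard : (insert ℓ S).card = (insert m S).card := by
        rw [Finset.card_insert_of_notMem hlS, Finset.card_insert_of_notMem hmS]
      have hF1 : ∀ x ∈ insert ℓ S, ∀ y : O, y ∉ insert ℓ S → W i y ≤ W i x := by
        intro x hx y hy
        have hyS : y ∉ S := fun h => hy (Finset.mem_insert_of_mem h)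
        have hy' : W i y ≤ W i ℓ := by
          by_contra hc
          exact hyS (by simp [hS]; exact lt_of_not_ge hc)
        rcases Finset.mem_insert.1 hx with h | h
        · rw [h]; exact hy'
        · have : W i ℓ < W i x := by simpa [hS] using h
          linarith
      have hF2 : ∀ x ∈ insert m S, ∀ y : O, y ∉ insert m S → W i y ≤ W i x := by
        intro x hx y hy
        have hyS : y ∉ S := fun h => hy (Finset.mem_insert_of_mem h)
        have hy' : W i y ≤ W i ℓ := by
          by_contra hc
          exact hyS (by simp [hS]; exact lt_of_not_ge hc)
        rcases Finset.mem_insert.1 hx with h | h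
        · rw [h, ← heq]; exact hy'
        · have : W i ℓ < W i x := by simpa [hS] using h
          linarith
      have g1 := generates_twoBlock W i j (insert ℓ S) hF1
      have g2 := generates_twoBlock W i j (insert m S) hF2
      rw [← hcard] at g2
      have hππ := (H1 _).unique g1 g2
      have hℓ := congrFun hππ ℓ
      simp [Finset.mem_insert, hlm, hlS, hmS] at hℓ
      exact hj hℓ.symm
    have hconf : ∀ (i j : A) (ℓ m : O), W i m < W i ℓ → W j ℓ < W j m → False := by
      intro i j ℓ m h1 h2
      have hml : m ≠ ℓ := fun h => by rw [h] at h1; exact lt_irrefl _ h1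
      obtain ⟨σ, ⟨ord, hord, hsin⟩, -⟩ := H2 (fun o => if o = ℓ then j else i)
      rcases le_total (ord.symm ℓ) (ord.symm m) with h | h
      · have hs := hsin _ _ h
        rw [Equiv.apply_symm_apply, Equiv.apply_symm_apply] at hs
        have hσ : σ (ord.symm ℓ) = j := by
          have := hord (ord.symm ℓ)
          rw [Equiv.apply_symm_apply] at this
          simpa using this.symm
        rw [hσ] at hs
        exact absurd hs (not_le.2 h2)
      · have hs := hsin _ _ h
        rw [Equiv.apply_symm_apply, Equiv.apply_symm_apply] at hs
        have hσ : σ (ord.symm m) = i := by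
          have := hord (ord.symm m)
          rw [Equiv.apply_symm_apply] at this
          simp [hml] at this
          exact this.symm
        rw [hσ] at hs
        exact absurd hs (not_le.2 h1)
    refine ⟨hstrict, ?_⟩
    haveI : Nonempty A := Fintype.card_pos_iff.1 (by omega)
    obtain ⟨a⟩ := ‹Nonempty A›
    obtain ⟨e, he⟩ := sortEnum (W a)
    refine ⟨e.symm, fun i ℓ m hle => ?_⟩
    by_cases hlm : ℓ = m
    · rw [hlm]
    · have h1 : W a m ≤ W a ℓ := by
        have := he (e.symm ℓ) (e.symm m) hle
        simpa using this
      have h2 : W a m < W a ℓ :=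
        lt_of_le_of_ne h1 (hstrict a m ℓ (fun h => hlm h.symm))
      by_contra hc
      exact hconf a i ℓ m h2 (lt_of_not_ge hc)
  · rintro ⟨hstrict, r, hr⟩
    constructor
    · intro σ
      refine ⟨fun o => σ (r o), ⟨r.symm, by simp, fun t s hts =>
        hr (σ t) (r.symm t) (r.symm s) (by simpa using hts)⟩, ?_⟩
      rintro π ⟨ord, hord, hsin⟩
      have hords := ord_eq_of_sameOrder hstrict r hr ord hord hsin
      funext o
      have h := hord (r o)
      rw [hords (r o)] at h
      simpa using h
    · intro π
      refine ⟨fun t => π (r.symm t), ⟨r.symm, fun t => rfl, fun t s hts =>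
        hr (π (r.symm t)) (r.symm t) (r.symm s) (by simpa using hts)⟩, ?_⟩
      rintro σ ⟨ord, hord, hsin⟩
      funext t
      have h := hord t
      rw [ord_eq_of_sameOrder hstrict r hr ord hord hsin t] at h
      exact h.symm
end

section
/- No frustrating allocation is Pareto-optimal: in every Pareto-optimal allocation (with respect to additive utilities), at least one agent receives one of her top objects. -/
open Finset

variable {A O : Type*}

/-- Additive utility of a bundle. -/
noncomputable def util (W : A → O → ℝ) (i : A) (S : Finset O) : ℝ := ∑ ℓ ∈ S, W i ℓ

/-- The share of agent `i` in allocation `π`. -/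
def share [Fintype O] [DecidableEq A] (π : O → A) (i : A) : Finset O :=
  Finset.univ.filter (fun ℓ => π ℓ = i)

/-- `π'` Pareto-dominates `π` (additive utilities). -/
def Dominates [Fintype O] [DecidableEq A] (W : A → O → ℝ) (π' π : O → A) : Prop :=
  (∀ i, util W i (share π i) ≤ util W i (share π' i)) ∧
  ∃ j, util W j (share π j) < util W j (share π' j)

def ParetoOptimal [Fintype O] [DecidableEq A] (W : A → O → ℝ) (π : O → A) : Prop :=
  ¬ ∃ π' : O → A, Dominates W π' π

def EnvyFree [Fintype O] [DecidableEq A] (W : A → O → ℝ) (π : O → A) : Prop :=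
  ∀ i j, util W i (share π j) ≤ util W i (share π i)

/-- `(π, p)` forms a competitive equilibrium from equal incomes. -/
def IsCEEIWith [Fintype O] [DecidableEq A] (W : A → O → ℝ) (π : O → A) (p : O → ℝ) : Prop :=
  (∀ ℓ, 0 ≤ p ℓ ∧ p ℓ ≤ 1) ∧
  ∀ i, (∑ ℓ ∈ share π i, p ℓ) ≤ 1 ∧
    ∀ S : Finset O, (∑ ℓ ∈ S, p ℓ) ≤ 1 → util W i S ≤ util W i (share π i)

def IsCEEI [Fintype O] [DecidableEq A] (W : A → O → ℝ) (π : O → A) : Prop :=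
  ∃ p : O → ℝ, IsCEEIWith W π p

/-- No frustrating allocation is Pareto-optimal. -/
theorem frustrating_not_paretoOptimal [Fintype O] [DecidableEq A] [Nonempty O]
    (W : A → O → ℝ) (π : O → A) (h : Frustrating W π Finset.univ) :
    ¬ ParetoOptimal W π := by
  classical
  intro hPO
  choose f _ hf using fun ℓ => h ℓ (mem_univ ℓ)
  set x := Classical.arbitrary O with hx
  have hper : ∃ (y : O) (n : ℕ), 0 < n ∧ f^[n] y = y := by
    obtain ⟨a, b, hab, heq⟩ :=
      Finite.exists_ne_map_eq_of_infinite (fun k : ℕ => f^[k] x)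
    rcases hab.lt_or_gt with hlt | hlt
    · exact ⟨f^[a] x, b - a, Nat.sub_pos_of_lt hlt, by
        rw [← Function.iterate_add_apply, Nat.sub_add_cancel hlt.le, ← heq]⟩
    · exact ⟨f^[b] x, a - b, Nat.sub_pos_of_lt hlt, by
        rw [← Function.iterate_add_apply, Nat.sub_add_cancel hlt.le, heq]⟩
  obtain ⟨y, n, hn, hny⟩ := hper
  set C : Set O := Set.range (fun k => f^[k] y) with hC
  have hyC : y ∈ C := ⟨0, rfl⟩
  set g : O → O := fun m => if m ∈ C then f m else m with hg
  have hsurj : Function.Surjective g := by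
    intro m
    by_cases hm : m ∈ C
    · obtain ⟨k, hk⟩ := hm
      refine ⟨f^[k + n - 1] y, ?_⟩
      have hCmem : f^[k + n - 1] y ∈ C := ⟨_, rfl⟩
      have h1 : k + n - 1 + 1 = k + n := by omega
      simp only [hg, if_pos hCmem]
      rw [← Function.iterate_succ_apply' f, Nat.succ_eq_add_one, h1, Function.iterate_add_apply, hny]
      exact hk
    · exact ⟨m, by simp only [hg, if_neg hm]⟩
  have hbij : Function.Bijective g := Finite.surjective_iff_bijective.mp hsurj
  set e := Equiv.ofBijective g hbij with he
  set π' : O → A := fun m => π (e.symm m) with hπ'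
  have hshare : ∀ i, share π' i = (share π i).map e.toEmbedding := by
    intro i
    ext m
    simp only [share, mem_filter, mem_univ, true_and, Finset.mem_map,
      Equiv.coe_toEmbedding, hπ']
    constructor
    · intro hm
      exact ⟨e.symm m, hm, e.apply_symm_apply m⟩
    · rintro ⟨ℓ, hℓ, rfl⟩
      simpa using hℓ
  have hutil : ∀ i, util W i (share π' i) = ∑ ℓ ∈ share π i, W i (g ℓ) := by
    intro i
    rw [util, hshare, Finset.sum_map]
    rfl
  have hle : ∀ i, ∀ ℓ ∈ share π i, W i ℓ ≤ W i (g ℓ) := by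
    intro i ℓ hℓ
    simp only [share, mem_filter, mem_univ, true_and] at hℓ
    by_cases hc : ℓ ∈ C
    · have h2 := hf ℓ
      rw [hℓ] at h2
      simp only [hg, if_pos hc]
      exact h2.le
    · simp only [hg, if_neg hc]
      exact le_refl _
  refine hPO ⟨π', fun i => ?_, ⟨π y, ?_⟩⟩
  · rw [hutil]
    exact Finset.sum_le_sum (hle i)
  · rw [hutil]
    refine Finset.sum_lt_sum (hle (π y)) ⟨y, ?_, ?_⟩
    · simp [share]
    · have h2 := hf y
      simp only [hg, if_pos hyC]
      exact h2
end

section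
/- If a non-sequenceable allocation contains a frustrating sub-allocation on objects O', then there exists a trading cycle among distinct agents a_1,…,a_k involved in O' (k ≥ 2) and distinct objects o_1,…,o_k in O' such that each a_j receives o_{j-1} (indices mod k) in the allocation while W(a_j, o_j) > W(a_j, o_{j-1}); reallocating along the cycle yields an allocation that Pareto-dominates the original under additive utilities. -/
open Finset

variable {A O : Type*}

/-- From a frustrating sub-allocation one extracts a trading cycle whose
reallocation Pareto-dominates the original allocation. -/
theorem frustrating_gives_trading_cycle [Fintype O] [DecidableEq O] [DecidableEq A]
    (W : A → O → ℝ) (π : O → A) (O' : Finset O)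
    (hne : O'.Nonempty) (hf : Frustrating W π O') :
    ∃ k : ℕ, 2 ≤ k ∧
      ∃ (a : ZMod k → A) (o : ZMod k → O),
        Function.Injective a ∧ Function.Injective o ∧
        (∀ j, o j ∈ O') ∧
        (∀ j : ZMod k, π (o (j - 1)) = a j) ∧
        (∀ j : ZMod k, W (a j) (o (j - 1)) < W (a j) (o j)) ∧
        ∃ π' : O → A,
          (∀ j, π' (o j) = a j) ∧
          (∀ ℓ : O, (∀ j, ℓ ≠ o j) → π' ℓ = π ℓ) ∧
          Dominates W π' π := by
  classical
  -- best object of O' for each agent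
  have hbest : ∀ i : A, ∃ m ∈ O', ∀ m' ∈ O', W i m' ≤ W i m := fun i =>
    O'.exists_max_image (W i) hne
  choose b hbO' hbmax using hbest
  -- step function on the subtype
  set g : O' → O' := fun ℓ => ⟨b (π ℓ), hbO' _⟩ with hg
  have hglt : ∀ ℓ : O', W (π ℓ) (ℓ : O) < W (π ℓ) ((g ℓ : O'): O) := by
    intro ℓ
    obtain ⟨m, hm, hlt⟩ := hf ℓ ℓ.2
    exact lt_of_lt_of_le hlt (hbmax _ _ hm)
  have hgπ : ∀ ℓ ℓ' : O', π ℓ = π ℓ' → g ℓ = g ℓ' := by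
    intro ℓ ℓ' h; simp [hg, h]
  -- find a periodic point
  obtain ⟨x0, hx0⟩ := hne
  obtain ⟨n, m, hnm, heq⟩ := Finite.exists_ne_map_eq_of_infinite
    (fun n : ℕ => g^[n] ⟨x0, hx0⟩)
  wlog hlt' : n < m generalizing n m
  · exact this m n (Ne.symm hnm) heq.symm (by omega)
  set y : O' := g^[n] ⟨x0, hx0⟩ with hy
  have hper : Function.IsPeriodicPt g (m - n) y := by
    unfold Function.IsPeriodicPt Function.IsFixedPt
    rw [hy, ← Function.iterate_add_apply]
    have : m - n + n = m := by omega
    rw [this]; exact heq.symm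
  set k : ℕ := Function.minimalPeriod g y with hkdef
  have hkpos : 0 < k := hper.minimalPeriod_pos (by omega)
  have hkper : Function.IsPeriodicPt g k y := Function.isPeriodicPt_minimalPeriod g y
  have hk1 : k ≠ 1 := by
    intro h1
    have hfx : g y = y := Function.minimalPeriod_eq_one_iff_isFixedPt.mp h1
    have hfix := hglt y
    rw [hfx] at hfix
    exact lt_irrefl _ hfix
  have hk2 : 2 ≤ k := by omega
  haveI : NeZero k := ⟨by omega⟩
  -- define the cycle
  set oo : ZMod k → O' := fun j => g^[j.val] y with hoo
  have hooinj : Function.Injective oo := by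
    intro i j h
    have := Function.iterate_injOn_Iio_minimalPeriod (f := g) (x := y)
      (Set.mem_Iio.mpr (ZMod.val_lt i)) (Set.mem_Iio.mpr (ZMod.val_lt j)) h
    exact ZMod.val_injective k this
  have hoostep : ∀ j : ZMod k, oo (j + 1) = g (oo j) := by
    intro j
    show g^[(j + 1).val] y = g (g^[j.val] y)
    rw [← Function.iterate_succ_apply' g j.val y]
    have hval : (j + 1).val = (j.val + 1) % k := by
      rw [ZMod.val_add, ZMod.val_one'' (by omega)]
    rw [hval]
    exact hkper.iterate_mod_apply (j.val + 1)
  set o : ZMod k → O := fun j => (oo j : O) with ho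
  have hoinj : Function.Injective o := fun i j h => hooinj (Subtype.ext h)
  set a : ZMod k → A := fun j => π (o (j - 1)) with ha
  have hstep : ∀ j : ZMod k, o (j + 1) = (g (oo j) : O) := fun j => by
    rw [ho]; simp only; rw [hoostep]
  have haπ : ∀ j : ZMod k, π (o (j - 1)) = a j := fun j => rfl
  have hW : ∀ j : ZMod k, W (a j) (o (j - 1)) < W (a j) (o j) := by
    intro j
    have := hglt (oo (j - 1))
    have h2 : o ((j - 1) + 1) = (g (oo (j - 1)) : O) := hstep (j - 1)
    rw [sub_add_cancel] at h2
    rw [ha]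
    simp only
    rw [h2]
    exact this
  have hainj : Function.Injective a := by
    intro i j h
    have : g (oo (i - 1)) = g (oo (j - 1)) := hgπ _ _ h
    have h2 : oo ((i-1)+1) = oo ((j-1)+1) := by rw [hoostep, hoostep, this]
    rw [sub_add_cancel, sub_add_cancel] at h2
    exact hooinj h2
  -- ownership of o j in π
  have hπo : ∀ j : ZMod k, π (o j) = a (j + 1) := by
    intro j; rw [← haπ (j + 1), add_sub_cancel_right]
  -- define π'
  set π' : O → A := fun ℓ => if h : ∃ j, o j = ℓ then a h.choose else π ℓ with hπ'
  have hπ'o : ∀ j, π' (o j) = a j := by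
    intro j
    have h : ∃ j', o j' = o j := ⟨j, rfl⟩
    simp only [hπ']
    rw [dif_pos h]
    congr 1
    exact hoinj h.choose_spec
  have hπ'other : ∀ ℓ : O, (∀ j, ℓ ≠ o j) → π' ℓ = π ℓ := by
    intro ℓ hℓ
    simp only [hπ']
    rw [dif_neg]
    rintro ⟨j, hj⟩; exact hℓ j hj.symm
  -- utility computation
  have hutil : ∀ (ρ : O → A) (i : A),
      util W i (share ρ i) = ∑ ℓ : O, if ρ ℓ = i then W i ℓ else 0 := by
    intro ρ i
    rw [util, share, Finset.sum_filter]
  have hdiff : ∀ i : A,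
      util W i (share π' i) - util W i (share π i)
        = ∑ j : ZMod k, if a j = i then W i (o j) - W i (o (j - 1)) else 0 := by
    intro i
    rw [hutil, hutil, ← Finset.sum_sub_distrib]
    have hsplit : ∀ ℓ : O,
        ((if π' ℓ = i then W i ℓ else 0) - (if π ℓ = i then W i ℓ else 0))
          = if h : ∃ j, o j = ℓ then
              ((if a h.choose = i then W i ℓ else 0)
                - (if a (h.choose + 1) = i then W i ℓ else 0)) else 0 := by
      intro ℓ
      by_cases h : ∃ j, o j = ℓ
      · rw [dif_pos h]
        have h1 : π' ℓ = a h.choose := by rw [← hπ'o h.choose, h.choose_spec]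
        have h2 : π ℓ = a (h.choose + 1) := by rw [← hπo h.choose, h.choose_spec]
        rw [h1, h2]
      · rw [dif_neg h]
        have : π' ℓ = π ℓ := hπ'other ℓ (fun j hj => h ⟨j, hj.symm⟩)
        rw [this]; ring
    rw [Finset.sum_congr rfl (fun ℓ _ => hsplit ℓ)]
    rw [← Finset.sum_subset (Finset.subset_univ (Finset.univ.image o))]
    · rw [Finset.sum_image (fun i _ j _ h => hoinj h)]
      have hterm : ∀ j : ZMod k,
          (if h : ∃ j', o j' = o j then
              ((if a h.choose = i then W i (o j) else 0)
                - (if a (h.choose + 1) = i then W i (o j) else 0)) else 0)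
            = (if a j = i then W i (o j) else 0)
              - (if a (j + 1) = i then W i (o j) else 0) := by
        intro j
        have h : ∃ j', o j' = o j := ⟨j, rfl⟩
        rw [dif_pos h]
        have : h.choose = j := hoinj h.choose_spec
        rw [this]
      rw [Finset.sum_congr rfl (fun j _ => hterm j), Finset.sum_sub_distrib]
      have hre : ∑ j : ZMod k, (if a (j + 1) = i then W i (o j) else 0)
          = ∑ j : ZMod k, (if a j = i then W i (o (j - 1)) else 0) := by
        apply Fintype.sum_equiv (Equiv.addRight (1 : ZMod k))
        intro j
        simp [Equiv.addRight, add_sub_cancel_right]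
      rw [hre, ← Finset.sum_sub_distrib]
      apply Finset.sum_congr rfl
      intro j _
      by_cases hji : a j = i
      · rw [if_pos hji, if_pos hji, if_pos hji]
      · rw [if_neg hji, if_neg hji, if_neg hji]; ring
    · intro ℓ _ hℓ
      rw [dif_neg]
      rintro ⟨j, hj⟩
      exact hℓ (Finset.mem_image.mpr ⟨j, Finset.mem_univ j, hj⟩)
  have hnonneg : ∀ i j, (0:ℝ) ≤ if a j = i then W i (o j) - W i (o (j - 1)) else 0 := by
    intro i j
    by_cases hji : a j = i
    · rw [if_pos hji, ← hji]; linarith [hW j]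
    · rw [if_neg hji]
  refine ⟨k, hk2, a, o, hainj, hoinj, fun j => (oo j).2, haπ, hW, π', hπ'o, hπ'other, ?_, ?_⟩
  · intro i
    have := hdiff i
    have hsum : (0:ℝ) ≤ ∑ j : ZMod k, if a j = i then W i (o j) - W i (o (j - 1)) else 0 :=
      Finset.sum_nonneg (fun j _ => hnonneg i j)
    linarith
  · refine ⟨a 0, ?_⟩
    have := hdiff (a 0)
    have hsum : (0:ℝ) < ∑ j : ZMod k, if a j = a 0 then W (a 0) (o j) - W (a 0) (o (j - 1)) else 0 := by
      apply Finset.sum_pos' (fun j _ => hnonneg (a 0) j)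
      refine ⟨0, Finset.mem_univ 0, ?_⟩
      rw [if_pos rfl]
      linarith [hW 0]
    linarith
end

section
/- There exists an envy-free allocation that is non-sequenceable, even with preferences strict on shares. Concretely, in the 3-agent 5-object instance with weight matrix rows (2,12,7,15,11), (12,15,11,7,2), (15,20,9,2,1), the allocation giving {3,5} to agent 1, {1,4} to agent 2, and {2} to agent 3 is envy-free but not sequenceable. -/
open Finset

variable {A O : Type*}

def Wz : Fin 3 → Fin 5 → ℤ := ![![2,12,7,15,11],![12,15,11,7,2],![15,20,9,2,1]]

lemma wz_cast : ∀ i j, (![![(2:ℝ),12,7,15,11],![12,15,11,7,2],![15,20,9,2,1]]) i j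
    = ((Wz i j : ℤ) : ℝ) := by
  intro i j; fin_cases i <;> fin_cases j <;> norm_num [Wz]

set_option maxHeartbeats 4000000 in
set_option maxRecDepth 20000 in
lemma no_perm : ¬ ∃ ord : Equiv.Perm (Fin 5), ∀ t s : Fin 5, t ≤ s →
    Wz ((![1,2,0,1,0] : Fin 5 → Fin 3) (ord t)) (ord s)
      ≤ Wz ((![1,2,0,1,0] : Fin 5 → Fin 3) (ord t)) (ord t) := by decide

/-- An envy-free, non-sequenceable allocation (Example 5):
agent 1 gets {3,5}, agent 2 gets {1,4}, agent 3 gets {2}. -/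
theorem envyFree_not_sequenceable_example :
    EnvyFree ![![(2:ℝ),12,7,15,11],![12,15,11,7,2],![15,20,9,2,1]]
      (![1,2,0,1,0] : Fin 5 → Fin 3) ∧
    ¬ Sequenceable ![![(2:ℝ),12,7,15,11],![12,15,11,7,2],![15,20,9,2,1]]
      (![1,2,0,1,0] : Fin 5 → Fin 3) := by
  constructor
  · intro i j
    fin_cases i <;> fin_cases j <;>
      simp [util, share, Finset.sum_filter, Fin.sum_univ_five, Fin.isValue] <;> norm_num
  · rintro ⟨M, σ, ord, hπ, hmax⟩
    have hM : M = 5 := by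
      have := Fintype.card_congr ord
      simpa using this
    subst hM
    apply no_perm
    refine ⟨ord, fun t s hts => ?_⟩
    have h := hmax t s hts
    rw [← hπ t] at h
    rw [wz_cast, wz_cast] at h
    exact_mod_cast h
end

section
/- Every CEEI allocation is sequenceable: if there exists a price vector p ∈ [0,1]^M such that each agent's bundle maximizes her additive utility among all bundles of total price at most 1, then the allocation can be generated by a sequence of sincere choices. -/
open Finset

variable {A O : Type*}

-- key lemma
theorem key [Fintype O] [DecidableEq A] (W : A → O → ℝ) (π : O → A) (p : O → ℝ)
    (hp : ∀ ℓ, 0 ≤ p ℓ ∧ p ℓ ≤ 1)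
    (hopt : ∀ i, (∑ ℓ ∈ share π i, p ℓ) ≤ 1 ∧
      ∀ S : Finset O, (∑ ℓ ∈ S, p ℓ) ≤ 1 → (∑ ℓ ∈ S, W i ℓ) ≤ ∑ ℓ ∈ share π i, W i ℓ)
    (O' : Finset O) (hne : O'.Nonempty) :
    ∃ ℓ ∈ O', ∀ m ∈ O', W (π ℓ) m ≤ W (π ℓ) ℓ := by
  classical
  by_contra hcon
  push_neg at hcon
  -- choose f ℓ = argmax over O' of W (π ℓ)
  have hf : ∀ ℓ ∈ O', ∃ m ∈ O', (∀ k ∈ O', W (π ℓ) k ≤ W (π ℓ) m) := by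
    intro ℓ hℓ
    obtain ⟨m, hm, hmax⟩ := O'.exists_max_image (W (π ℓ)) hne
    exact ⟨m, hm, hmax⟩
  choose f hfmem hfmax using hf
  have hstrict : ∀ ℓ (hℓ : ℓ ∈ O'), W (π ℓ) ℓ < W (π ℓ) (f ℓ hℓ) := by
    intro ℓ hℓ
    obtain ⟨m, hm, hlt⟩ := hcon ℓ hℓ
    exact lt_of_lt_of_le hlt (hfmax ℓ hℓ m hm)
  have hne_owner : ∀ ℓ (hℓ : ℓ ∈ O'), π (f ℓ hℓ) ≠ π ℓ := by
    intro ℓ hℓ heq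
    obtain ⟨m, hm, hlt⟩ := hcon (f ℓ hℓ) (hfmem ℓ hℓ)
    rw [heq] at hlt
    exact absurd (hfmax ℓ hℓ m hm) (not_le.2 hlt)
  have hprice : ∀ ℓ (hℓ : ℓ ∈ O'), p ℓ < p (f ℓ hℓ) := by
    intro ℓ hℓ
    set i := π ℓ with hi
    have hℓshare : ℓ ∈ share π i := by simp [share, hi]
    have hfnot : f ℓ hℓ ∉ share π i := by
      simp only [share, mem_filter, mem_univ, true_and]
      exact hne_owner ℓ hℓ
    set S : Finset O := insert (f ℓ hℓ) ((share π i).erase ℓ) with hS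
    have hfne : f ℓ hℓ ∉ (share π i).erase ℓ := fun h => hfnot (mem_of_mem_erase h)
    -- utility of S exceeds utility of share
    have hutil : (∑ k ∈ share π i, W i k) < ∑ k ∈ S, W i k := by
      rw [hS, Finset.sum_insert hfne, Finset.sum_erase_eq_sub hℓshare]
      have := hstrict ℓ hℓ
      linarith
    -- hence price of S must exceed 1
    have hSp : ¬ (∑ k ∈ S, p k) ≤ 1 := by
      intro hle
      exact absurd ((hopt i).2 S hle) (not_le.2 hutil)
    push_neg at hSp
    have hshare_p : (∑ k ∈ share π i, p k) ≤ 1 := (hopt i).1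
    have hSsum : (∑ k ∈ S, p k) = p (f ℓ hℓ) + ((∑ k ∈ share π i, p k) - p ℓ) := by
      rw [hS, Finset.sum_insert hfne, Finset.sum_erase_eq_sub hℓshare]
    linarith
  -- take max price
  obtain ⟨ℓ, hℓ, hmax⟩ := O'.exists_max_image p hne
  exact absurd (hmax _ (hfmem ℓ hℓ)) (not_le.2 (hprice ℓ hℓ))

theorem exists_list [Fintype O] [DecidableEq A] [DecidableEq O] (W : A → O → ℝ) (π : O → A)
    (htop : ∀ O' : Finset O, O'.Nonempty → ∃ ℓ ∈ O', ∀ m ∈ O', W (π ℓ) m ≤ W (π ℓ) ℓ) :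
    ∀ O' : Finset O, ∃ L : List O, L.Nodup ∧ L.toFinset = O' ∧
      ∀ (t s : ℕ) (ht : t < L.length) (hs : s < L.length), t ≤ s →
        W (π L[t]) L[s] ≤ W (π L[t]) L[t] := by
  classical
  intro O'
  induction O' using Finset.strongInduction with
  | _ O' ih =>
    rcases O'.eq_empty_or_nonempty with rfl | hne
    · exact ⟨[], List.nodup_nil, by simp, fun t s ht => by simp at ht⟩
    · obtain ⟨ℓ, hℓ, htopℓ⟩ := htop O' hne
      obtain ⟨L', hnd, htf, hprop⟩ := ih (O'.erase ℓ) (Finset.erase_ssubset hℓ)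
      refine ⟨ℓ :: L', ?_, ?_, ?_⟩
      · refine List.nodup_cons.2 ⟨?_, hnd⟩
        intro hmem
        have : ℓ ∈ O'.erase ℓ := htf ▸ List.mem_toFinset.2 hmem
        exact absurd this (Finset.notMem_erase ℓ O')
      · rw [List.toFinset_cons, htf, Finset.insert_erase hℓ]
      · intro t s ht hs hts
        match t, s with
        | 0, 0 => simp
        | 0, s + 1 =>
          simp only [List.getElem_cons_zero, List.getElem_cons_succ]
          have hs' : s < L'.length := by simpa using hs
          have : L'[s] ∈ O'.erase ℓ := htf ▸ List.mem_toFinset.2 (L'.getElem_mem hs')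
          exact htopℓ _ (Finset.mem_of_mem_erase this)
        | t + 1, s + 1 =>
          simp only [List.getElem_cons_succ]
          exact hprop t s (by simpa using ht) (by simpa using hs) (by omega)

/-- Every CEEI allocation is sequenceable. -/
theorem ceei_imp_sequenceable [Fintype O] [DecidableEq A]
    (W : A → O → ℝ) (π : O → A) (h : IsCEEI W π) :
    Sequenceable W π := by
  classical
  obtain ⟨p, hp, hopt⟩ := h
  have htop : ∀ O' : Finset O, O'.Nonempty → ∃ ℓ ∈ O', ∀ m ∈ O', W (π ℓ) m ≤ W (π ℓ) ℓ :=
    key W π p hp (fun i => by simpa [util] using hopt i)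
  obtain ⟨L, hnd, htf, hprop⟩ := exists_list W π htop Finset.univ
  have hall : ∀ x : O, x ∈ L := fun x => List.mem_toFinset.1 (htf ▸ Finset.mem_univ x)
  set ord := List.Nodup.getEquivOfForallMemList L hnd hall with hord
  have hord_apply : ∀ t : Fin L.length, ord t = L.get t := fun t => rfl
  refine ⟨L.length, fun t => π (ord t), ord, fun t => rfl, ?_⟩
  intro t s hts
  have h1 : ord t = L[(t : ℕ)] := hord_apply t
  have h2 : ord s = L[(s : ℕ)] := hord_apply s
  rw [h1, h2]
  exact hprop t s t.isLt s.isLt hts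
end

section
/- No frustrating allocation can be CEEI: if an allocation contains a frustrating sub-allocation, then no price vector p ∈ [0,1]^M makes it a competitive equilibrium from equal incomes. (Key step: given a trading cycle of agents each preferring (strictly, in total weight) the object the next one holds, summing the budget constraints Σ_{ℓ∈π_i} p_ℓ ≤ 1 and the strict-optimality constraints Σ_{ℓ∈π'_i} p_ℓ > 1 over the cycle agents gives a contradiction since the cycle merely permutes objects among these agents.) -/
open Finset

variable {A O : Type*}

/-- No allocation containing a frustrating sub-allocation can be a CEEI. -/
theorem frustrating_not_ceei [Fintype O] [DecidableEq A]
    (W : A → O → ℝ) (π : O → A)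
    (h : ∃ O' : Finset O, O'.Nonempty ∧ Frustrating W π O') :
    ¬ IsCEEI W π := by
  classical
  rintro ⟨p, hp, hopt⟩
  obtain ⟨O', hne, hF⟩ := h
  obtain ⟨ℓ, hℓ, hmax⟩ := O'.exists_max_image p hne
  set i := π ℓ with hi
  obtain ⟨m, hm, hmaxW⟩ := O'.exists_max_image (W i) hne
  obtain ⟨m0, hm0, hlt⟩ := hF ℓ hℓ
  have hWlt : W i ℓ < W i m := lt_of_lt_of_le hlt (hmaxW m0 hm0)
  have hmnot : π m ≠ i := by
    intro hmi
    obtain ⟨m', hm', h'⟩ := hF m hm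
    rw [hmi] at h'
    exact absurd (hmaxW m' hm') (not_le.mpr h')
  have hℓshare : ℓ ∈ share π i := by simp [share, hi]
  have hmnot' : m ∉ (share π i).erase ℓ := by
    intro hmem
    have := (Finset.mem_erase.mp hmem).2
    simp [share] at this
    exact hmnot this
  obtain ⟨hbudget, hbest⟩ := hopt i
  have hcost : ∑ x ∈ insert m ((share π i).erase ℓ), p x ≤ 1 := by
    rw [Finset.sum_insert hmnot', Finset.sum_erase_eq_sub hℓshare]
    have := hmax m hm
    linarith
  have hutil := hbest _ hcost
  simp only [util] at hutil
  rw [Finset.sum_insert hmnot', Finset.sum_erase_eq_sub hℓshare] at hutil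
  linarith
end

section
/- In the 2-agent 3-object instance with weight rows (8,2,1) and (5,1,5), the allocation ⟨{1,3},{2}⟩ (agent 1 gets objects 1 and 3, agent 2 gets object 2) is not sequenceable, even though agent 1 receives her unique top object. -/
open Finset

variable {A O : Type*}

/-- The allocation ⟨{1,3},{2}⟩ is non-sequenceable even though agent 1
receives her unique top object. -/
theorem nonsequenceable_with_top_example :
    ¬ Sequenceable ![![(8:ℝ),2,1],![5,1,5]] (![0,1,0] : Fin 3 → Fin 2) ∧
    (![0,1,0] : Fin 3 → Fin 2) 0 = 0 ∧
    (∀ m : Fin 3, m ≠ 0 → ![![(8:ℝ),2,1],![5,1,5]] 0 m < ![![(8:ℝ),2,1],![5,1,5]] 0 0) := by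
  refine ⟨?_, rfl, ?_⟩
  · rintro ⟨M, σ, ord, hπ, hmax⟩
    have hM : M = 3 := by simpa using Fintype.card_congr ord
    subst hM
    -- abbreviations
    have key : ∀ t s : Fin 3, t ≤ s →
        (![![(8:ℝ),2,1],![5,1,5]]) ((![0,1,0] : Fin 3 → Fin 2) (ord t)) (ord s) ≤
        (![![(8:ℝ),2,1],![5,1,5]]) ((![0,1,0] : Fin 3 → Fin 2) (ord t)) (ord t) := by
      intro t s hts
      rw [hπ t]; exact hmax t s hts
    obtain ⟨a, ha⟩ : ∃ a, ord 0 = a := ⟨_, rfl⟩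
    fin_cases a
    · -- first pick is object 0; consider second pick
      obtain ⟨b, hb⟩ : ∃ b, ord 1 = b := ⟨_, rfl⟩
      fin_cases b
      · exact absurd (ord.injective (ha.trans hb.symm)) (by decide)
      · -- second pick is object 1 (agent 1, value 1), but object 2 (value 5) remains
        have h2 : ord (ord.symm 2) = 2 := ord.apply_symm_apply 2
        have hle : (1 : Fin 3) ≤ ord.symm 2 := by
          have h0 : ord.symm 2 ≠ 0 := fun h => by simp [h, ha] at h2
          have h1 : ord.symm 2 ≠ 1 := fun h => by simp [h, hb] at h2
          omega
        have := key 1 (ord.symm 2) hle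
        rw [hb, h2] at this
        norm_num [Matrix.cons_val_one, Matrix.head_cons, Matrix.cons_val_two, Matrix.tail_cons] at this
      · -- second pick is object 2 (agent 0, value 1), but object 1 (value 2) remains
        have h2 : ord (ord.symm 1) = 1 := ord.apply_symm_apply 1
        have hle : (1 : Fin 3) ≤ ord.symm 1 := by
          have h0 : ord.symm 1 ≠ 0 := fun h => by simp [h, ha] at h2
          have h1 : ord.symm 1 ≠ 1 := fun h => by simp [h, hb] at h2
          omega
        have := key 1 (ord.symm 1) hle
        rw [hb, h2] at this
        norm_num [Matrix.cons_val_one, Matrix.head_cons] at this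
    · -- first pick is object 1 (agent 1, value 1), but object 2 (value 5) remains
      have h2 : ord (ord.symm 2) = 2 := ord.apply_symm_apply 2
      have := key 0 (ord.symm 2) (Fin.zero_le _)
      rw [ha, h2] at this
      norm_num [Matrix.cons_val_one, Matrix.head_cons, Matrix.cons_val_two, Matrix.tail_cons] at this
    · -- first pick is object 2 (agent 0, value 1), but object 0 (value 8) remains
      have h2 : ord (ord.symm 0) = 0 := ord.apply_symm_apply 0
      have := key 0 (ord.symm 0) (Fin.zero_le _)
      rw [ha, h2] at this
      norm_num [Matrix.cons_val_one, Matrix.head_cons] at this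
  · intro m hm
    fin_cases m
    · exact absurd rfl hm
    · norm_num
    · norm_num
end

section
/- An allocation in which every agent receives her unique top object can still be non-sequenceable: in the 2-agent 4-object instance with weight rows (9,8,2,1) and (2,5,1,4), the allocation ⟨{1,4},{2,3}⟩ gives each agent her top object (object 1 to agent 1, object 2 to agent 2) but is not sequenceable, because the sub-allocation on objects {3,4} is frustrating. -/
open Finset

variable {A O : Type*}

/-- The allocation ⟨{1,4},{2,3}⟩ gives every agent her unique top object, yet it is
non-sequenceable because its sub-allocation on objects {3,4} is frustrating. -/
theorem nonsequenceable_all_tops_example :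
    (![0,1,1,0] : Fin 4 → Fin 2) 0 = 0 ∧
    (![0,1,1,0] : Fin 4 → Fin 2) 1 = 1 ∧
    (∀ m : Fin 4, m ≠ 0 → ![![(9:ℝ),8,2,1],![2,5,1,4]] 0 m < ![![(9:ℝ),8,2,1],![2,5,1,4]] 0 0) ∧
    (∀ m : Fin 4, m ≠ 1 → ![![(9:ℝ),8,2,1],![2,5,1,4]] 1 m < ![![(9:ℝ),8,2,1],![2,5,1,4]] 1 1) ∧
    Frustrating ![![(9:ℝ),8,2,1],![2,5,1,4]] (![0,1,1,0] : Fin 4 → Fin 2) ({2,3} : Finset (Fin 4)) ∧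
    ¬ Sequenceable ![![(9:ℝ),8,2,1],![2,5,1,4]] (![0,1,1,0] : Fin 4 → Fin 2) := by
  refine ⟨rfl, rfl, ?_, ?_, ?_, ?_⟩
  · intro m hm; fin_cases m <;> simp_all <;> norm_num
  · intro m hm; fin_cases m <;> simp_all <;> norm_num
  · intro ℓ hℓ
    fin_cases hℓ
    · exact ⟨3, by simp, by change (1:ℝ) < 4; norm_num⟩
    · exact ⟨2, by simp, by change (1:ℝ) < 2; norm_num⟩
  · rintro ⟨M, σ, ord, hπ, hmax⟩
    set t2 := ord.symm 2 with ht2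
    set t3 := ord.symm 3 with ht3
    rcases le_total t2 t3 with h | h
    · have := hmax t2 t3 h
      rw [Equiv.apply_symm_apply, Equiv.apply_symm_apply, ← hπ t2, Equiv.apply_symm_apply] at this
      change (4:ℝ) ≤ 1 at this; norm_num at this
    · have := hmax t3 t2 h
      rw [Equiv.apply_symm_apply, Equiv.apply_symm_apply, ← hπ t3, Equiv.apply_symm_apply] at this
      change (2:ℝ) ≤ 1 at this; norm_num at this
end
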